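/- arXiv:1205.0621 — 2 statements merged into one kernel-verified Lean document; each statement's English description precedes it below -/
import Mathlib

section
/- Let A be a commutative ring, s ≤ t, and let a be an s×n matrix and b a t×n matrix over A (with appropriate sizes so that f̂a + ĝb makes sense as n degree-one elements). In the exterior algebra on generators f̂_1,...,f̂_s, ĝ_1,...,ĝ_t, consider the product P = Π_{k=1}^n (Σ_i f̂_i a^i_k + Σ_j ĝ_j b^j_k). Then the contraction of P against the top form f̂_1∧···∧f̂_s (i.e., extracting the full f̂_1∧···∧f̂_s component) equals Σ over subsets S ⊆ {1,...,n} of size s and complements of the appropriate sign: sign(S) · det(a_S) · Π_{k ∉ S}(Σ_j ĝ_j b^j_k), where a_S is the s×s submatrix of a with columns in S. -/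
open ExteriorAlgebra

/-!
Expand `∏ₖ (fₖ + gₖ)` multilinearly into a sum over the sets `S` of positions carrying an
`f`-factor. Moving the `f`-factors to the front costs the shuffle sign
`(-1)^(Σ_{k ∈ S} k - s(s-1)/2)`. The contractions kill the `g`-factors, so they only see the
`f`-block: by Laplace expansion along the first row they produce `det (φᵢ (f_{S_l}))` when
`#S = s` and `0` when `#S < s`, while for `#S > s` the `f`-block itself vanishes because the
`fₖ` lie in a module spanned by `s` vectors.
-/

namespace List

variable {B : Type*} [Ring B] {κ : Type*}

theorem mul_prod_of_anticomm (x : B) :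
    ∀ L : List B, (∀ y ∈ L, x * y = -(y * x)) → x * L.prod = (-1 : ℤ) ^ L.length • (L.prod * x)
  | [], _ => by simp
  | y :: L, h => by
    rw [prod_cons, ← mul_assoc, h y mem_cons_self, neg_mul, mul_assoc,
      mul_prod_of_anticomm x L fun z hz => h z (mem_cons_of_mem _ hz),
      mul_smul_comm, ← neg_smul, length_cons, pow_succ, mul_neg_one, mul_assoc]

/-- The number of pairs `i < j` with `¬ p (l i)` and `p (l j)`: the number of transpositions
needed to move the entries satisfying `p` to the front. -/
def shuffleInversions (p : κ → Prop) [DecidablePred p] : List κ → ℕ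
  | [] => 0
  | k :: l => (if p k then 0 else (l.filter (p ·)).length) + shuffleInversions p l

theorem prod_map_ite_of_anticomm (p : κ → Prop) [DecidablePred p] (f g : κ → B)
    (hfg : ∀ j k, g k * f j = -(f j * g k)) :
    ∀ l : List κ, (l.map fun k => if p k then f k else g k).prod
      = (-1 : ℤ) ^ l.shuffleInversions p •
          (((l.filter (p ·)).map f).prod * ((l.filter (¬ p ·)).map g).prod)
  | [] => by simp [shuffleInversions]
  | k :: l => by
    have ih := prod_map_ite_of_anticomm p f g hfg l
    by_cases hk : p k
    · rw [filter_cons_of_pos (by simpa using hk), filter_cons_of_neg (by simpa using hk)]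
      simp only [map_cons, prod_cons, if_pos hk, shuffleInversions, zero_add, ih]
      rw [mul_smul_comm, mul_assoc]
    · have hcomm := mul_prod_of_anticomm (g k) ((l.filter (p ·)).map f)
        (by simp only [mem_map]; rintro _ ⟨j, -, rfl⟩; exact hfg j k)
      rw [filter_cons_of_neg (by simpa using hk), filter_cons_of_pos (by simpa using hk)]
      simp only [map_cons, prod_cons, if_neg hk, shuffleInversions, ih, length_map] at hcomm ⊢
      rw [mul_smul_comm, ← mul_assoc, hcomm, smul_mul_assoc, smul_smul, ← pow_add, mul_assoc,
        add_comm (length _)]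

theorem shuffleInversions_map {ι : Type*} (p : κ → Prop) [DecidablePred p] (e : ι → κ) :
    ∀ l : List ι, (l.map e).shuffleInversions p = l.shuffleInversions (p ∘ e)
  | [] => rfl
  | k :: l => by
    simp only [map_cons, shuffleInversions, filter_map, length_map, Function.comp_apply,
      shuffleInversions_map p e l]
    rfl

theorem shuffleInversions_finRange_add {m : ℕ} (p : Fin m → Prop) [DecidablePred p] :
    (finRange m).shuffleInversions p
        + ((finRange m).filter (p ·)).length * (((finRange m).filter (p ·)).length - 1) / 2
      = (((finRange m).filter (p ·)).map Fin.val).sum := by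
  induction m with
  | zero => simp [shuffleInversions]
  | succ m ih =>
    rw [finRange_succ, filter_cons, filter_map]
    simp only [shuffleInversions, shuffleInversions_map, filter_map, Function.comp_def]
    have ih' := ih (fun k => p k.succ)
    set L := (finRange m).filter (fun k => p k.succ)
    have hsum : ((L.map Fin.succ).map Fin.val).sum = (L.map Fin.val).sum + L.length := by
      simp [Function.comp_def, sum_map_add]
    by_cases h0 : p 0
    · simp only [h0, decide_true, if_true, length_cons, length_map, map_cons, sum_cons,
        Fin.val_zero, zero_add, hsum, Nat.triangle_succ]
      omega
    · simp only [h0, decide_false, if_false, Bool.false_eq_true, length_map, hsum]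
      omega

end List

theorem Finset.sort_eq_filter_finRange {m : ℕ} (S : Finset (Fin m)) :
    S.sort (· ≤ ·) = (List.finRange m).filter (· ∈ S) :=
  S.sortedLT_sort.eq_of_mem_iff ((List.pairwise_lt_finRange m).filter _).sortedLT
    (by simp)

theorem neg_one_pow_shuffleInversions_finRange {m : ℕ} (S : Finset (Fin m)) :
    (-1 : ℤ) ^ (List.finRange m).shuffleInversions (· ∈ S)
      = (-1) ^ ((∑ k ∈ S, (k : ℕ)) + S.card * (S.card - 1) / 2) := by
  have hcount := List.shuffleInversions_finRange_add (· ∈ S)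
  rw [← S.sort_eq_filter_finRange, Finset.length_sort,
    ← List.sum_toFinset _ (S.sort_nodup _), Finset.sort_toFinset] at hcount
  rw [← hcount, add_assoc, ← two_mul, pow_add, pow_mul, neg_one_sq, one_pow, mul_one]

theorem AlternatingMap.map_eq_zero_of_mem_span_of_card_lt {R M N ι κ : Type*} [CommSemiring R]
    [AddCommMonoid M] [Module R M] [AddCommMonoid N] [Module R N] [Fintype ι] [DecidableEq ι]
    [Fintype κ] (f : M [⋀^ι]→ₗ[R] N) (e : κ → M) (v : ι → M)
    (hv : ∀ i, v i ∈ Submodule.span R (Set.range e)) (h : Fintype.card κ < Fintype.card ι) :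
    f v = 0 := by
  choose c hc using fun i => (Submodule.mem_span_range_iff_exists_fun R).mp (hv i)
  obtain rfl : v = fun i => ∑ j, c i j • e j := funext fun i => (hc i).symm
  rw [← f.coe_multilinearMap, MultilinearMap.map_sum]
  refine Finset.sum_eq_zero fun r _ => ?_
  have hr : ¬ Function.Injective (e ∘ r) := fun hinj =>
    (Fintype.card_le_of_injective r hinj.of_comp).not_gt h
  rw [MultilinearMap.map_smul_univ, f.coe_multilinearMap]
  exact smul_eq_zero_of_right _ (f.map_eq_zero_of_not_injective _ hr)

namespace ExteriorAlgebra

open CliffordAlgebra (contractLeft contractLeft_ι_mul contractLeft_one)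

variable {R M : Type*} [CommRing R] [AddCommGroup M] [Module R M]

theorem contractLeft_ιMulti_succ_mul (φ : Module.Dual R M) {n : ℕ} (v : Fin (n + 1) → M)
    (G : ExteriorAlgebra R M) (hG : contractLeft φ G = 0) :
    contractLeft φ (ιMulti R (n + 1) v * G)
      = ∑ j : Fin (n + 1), ((-1) ^ (j : ℕ) * φ (v j)) • (ιMulti R n (v ∘ j.succAbove) * G) := by
  induction n with
  | zero => simp [contractLeft_ι_mul, hG]
  | succ n ih =>
    rw [ιMulti_succ_apply, mul_assoc, contractLeft_ι_mul, ih, Fin.sum_univ_succ (n := n + 1),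
      Finset.mul_sum, sub_eq_add_neg, ← Finset.sum_neg_distrib]
    congr 1
    · simp [Matrix.vecTail, Function.comp_def]
    · refine Finset.sum_congr rfl fun j _ => ?_
      rw [ιMulti_succ_apply, mul_smul_comm, ← neg_smul, mul_assoc]
      simp [Matrix.vecTail, Function.comp_def, Fin.succ_succAbove_succ, pow_succ]

def contractLeftList : List (Module.Dual R M) → Module.End R (ExteriorAlgebra R M)
  | [] => LinearMap.id
  | φ :: Φ => contractLeftList Φ ∘ₗ contractLeft φ

@[simp]
theorem contractLeftList_cons (φ : Module.Dual R M) (Φ : List (Module.Dual R M))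
    (x : ExteriorAlgebra R M) :
    contractLeftList (φ :: Φ) x = contractLeftList Φ (contractLeft φ x) := rfl

theorem contractLeftList_apply (Φ : List (Module.Dual R M)) (x : ExteriorAlgebra R M) :
    contractLeftList Φ x = Φ.foldl (fun y φ => contractLeft φ y) x := by
  induction Φ generalizing x with
  | nil => rfl
  | cons φ Φ ih => exact ih _

theorem contractLeftList_ofFn_ιMulti_mul {n : ℕ} (Φ : Fin n → Module.Dual R M) (v : Fin n → M)
    (G : ExteriorAlgebra R M) (hG : ∀ i, contractLeft (Φ i) G = 0) :
    contractLeftList (List.ofFn Φ) (ιMulti R n v * G)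
      = (Matrix.of fun i j => Φ i (v j)).det • G := by
  induction n with
  | zero => simp [contractLeftList]
  | succ n ih =>
    rw [List.ofFn_succ, contractLeftList_cons, contractLeft_ιMulti_succ_mul _ _ _ (hG 0),
      map_sum, Matrix.det_succ_row_zero, Finset.sum_smul]
    refine Finset.sum_congr rfl fun j _ => ?_
    rw [map_smul, ih _ _ fun i => hG i.succ, smul_smul]
    rfl

theorem contractLeftList_ofFn_ιMulti_mul_of_lt {n r : ℕ} (Φ : Fin r → Module.Dual R M)
    (v : Fin n → M) (G : ExteriorAlgebra R M) (hG : ∀ i, contractLeft (Φ i) G = 0) (h : n < r) :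
    contractLeftList (List.ofFn Φ) (ιMulti R n v * G) = 0 := by
  obtain ⟨r, rfl⟩ := Nat.exists_eq_succ_of_ne_zero (Nat.ne_zero_of_lt h)
  induction n generalizing r with
  | zero => simp [hG 0]
  | succ n ih =>
    rw [List.ofFn_succ, contractLeftList_cons, contractLeft_ιMulti_succ_mul _ _ _ (hG 0), map_sum]
    refine Finset.sum_eq_zero fun j _ => ?_
    obtain ⟨r, rfl⟩ := Nat.exists_eq_succ_of_ne_zero (by omega : r ≠ 0)
    rw [map_smul, ih (hG := fun i => hG i.succ) (h := by omega), smul_zero]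

theorem contractLeft_list_prod_map_ι_eq_zero {κ : Type*} (φ : Module.Dual R M) (g : κ → M) :
    ∀ L : List κ, (∀ k ∈ L, φ (g k) = 0) → contractLeft φ (L.map fun k => ι R (g k)).prod = 0
  | [], _ => by simp [contractLeft_one]
  | k :: L, h => by
    rw [List.map_cons, List.prod_cons, contractLeft_ι_mul, h k List.mem_cons_self, zero_smul,
      contractLeft_list_prod_map_ι_eq_zero φ g L fun j hj => h j (List.mem_cons_of_mem _ hj),
      mul_zero, sub_zero]

theorem list_prod_map_sort_eq_ιMulti {κ : Type*} [LinearOrder κ] (S : Finset κ) {n : ℕ}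
    (h : S.card = n) (f : κ → M) :
    ((S.sort (· ≤ ·)).map fun k => ι R (f k)).prod = ιMulti R n (f ∘ S.orderEmbOfFin h) := by
  rw [← S.listMap_orderEmbOfFin_finRange h, List.map_map, ← List.ofFn_eq_map, ιMulti_apply]
  rfl

theorem contractLeftList_ofFn_sort_prod_mul {κ : Type*} [LinearOrder κ] {s : ℕ}
    (Φ : Fin s → Module.Dual R M) (e : Fin s → M) (f : κ → M)
    (hf : ∀ k, f k ∈ Submodule.span R (Set.range e)) (S : Finset κ) (G : ExteriorAlgebra R M)
    (hG : ∀ i, contractLeft (Φ i) G = 0) :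
    contractLeftList (List.ofFn Φ) (((S.sort (· ≤ ·)).map fun k => ι R (f k)).prod * G)
      = if h : S.card = s then (Matrix.of fun i l => Φ i (f (S.orderEmbOfFin h l))).det • G
        else 0 := by
  split_ifs with h
  · rw [list_prod_map_sort_eq_ιMulti S h, contractLeftList_ofFn_ιMulti_mul _ _ _ hG]
    rfl
  · rw [list_prod_map_sort_eq_ιMulti S rfl]
    rcases Nat.lt_or_gt_of_ne h with hlt | hgt
    · exact contractLeftList_ofFn_ιMulti_mul_of_lt _ _ _ hG hlt
    · rw [(ιMulti R S.card).map_eq_zero_of_mem_span_of_card_lt e (f ∘ S.orderEmbOfFin rfl)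
        (fun _ => hf _) (by simpa only [Fintype.card_fin] using hgt), zero_mul, map_zero]

theorem ιMulti_piecewise {m : ℕ} (S : Finset (Fin m)) (f g : Fin m → M) :
    ιMulti R m (S.piecewise f g)
      = (-1 : ℤ) ^ (List.finRange m).shuffleInversions (· ∈ S) •
          (((S.sort (· ≤ ·)).map fun k => ι R (f k)).prod
            * ((Sᶜ.sort (· ≤ ·)).map fun k => ι R (g k)).prod) := by
  have hcompl : (List.finRange m).filter (· ∈ Sᶜ) = (List.finRange m).filter (· ∉ S) :=
    List.filter_congr (by simp)
  rw [ιMulti_apply, List.ofFn_eq_map, S.sort_eq_filter_finRange, Sᶜ.sort_eq_filter_finRange,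
    hcompl, ← List.prod_map_ite_of_anticomm (· ∈ S) _ _
      fun j k => eq_neg_of_add_eq_zero_left (ι_add_mul_swap (g k) (f j))]
  simp only [Finset.piecewise, apply_ite]

theorem contractLeftList_ofFn_ιMulti_add {s m : ℕ} (Φ : Fin s → Module.Dual R M)
    (e : Fin s → M) (f g : Fin m → M) (hf : ∀ k, f k ∈ Submodule.span R (Set.range e))
    (hg : ∀ i k, Φ i (g k) = 0) :
    contractLeftList (List.ofFn Φ) (ιMulti R m (f + g))
      = ∑ S : {S : Finset (Fin m) // S.card = s},
          ((-1 : R) ^ ((∑ k ∈ S.1, (k : ℕ)) + s * (s - 1) / 2) *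
            (Matrix.of fun i l => Φ i (f (S.1.orderEmbOfFin S.2 l))).det) •
          ((S.1ᶜ.sort (· ≤ ·)).map fun k => ι R (g k)).prod := by
  have hG (S : Finset (Fin m)) (i : Fin s) :
      contractLeft (Φ i) ((Sᶜ.sort (· ≤ ·)).map fun k => ι R (g k)).prod = 0 :=
    contractLeft_list_prod_map_ι_eq_zero _ _ _ fun k _ => hg i k
  have hterm (S : Finset (Fin m)) :
      contractLeftList (List.ofFn Φ) (ιMulti R m (S.piecewise f g))
        = if h : S.card = s then
            ((-1 : R) ^ ((∑ k ∈ S, (k : ℕ)) + s * (s - 1) / 2) *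
              (Matrix.of fun i l => Φ i (f (S.orderEmbOfFin h l))).det) •
            ((Sᶜ.sort (· ≤ ·)).map fun k => ι R (g k)).prod
          else 0 := by
    rw [ιMulti_piecewise, map_zsmul, contractLeftList_ofFn_sort_prod_mul Φ e f hf S _ (hG S),
      neg_one_pow_shuffleInversions_finRange]
    split_ifs with h
    · rw [h, ← Int.cast_smul_eq_zsmul R, smul_smul]
      push_cast
      rfl
    · exact smul_zero _
  rw [(ιMulti R m).map_add_univ, map_sum, Finset.sum_congr rfl fun S _ => hterm S,
    Finset.sum_dite, Finset.sum_const_zero, add_zero]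
  exact Fintype.sum_equiv (Equiv.subtypeEquivRight (by simp)) _ _ fun _ => rfl

end ExteriorAlgebra

/-- In the exterior algebra on `f̂₁,...,f̂ₛ, ĝ₁,...,ĝₜ`, consider
`P = Πₖ (Σᵢ f̂ᵢ aⁱₖ + Σⱼ ĝⱼ bʲₖ)` (product over `k = 1,...,m` in order).
Contracting `P` against the dual top `f̂`-form (interior products by the dual
basis elements, normalized so that `f̂₁∧···∧f̂ₛ ↦ 1`) yields
`Σ_{S ⊆ {1..m}, |S| = s} sign(S) · det(a_S) · Π_{k∉S, asc} (Σⱼ ĝⱼ bʲₖ)`,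
where `a_S` is the `s×s` submatrix of `a` with columns in `S` (in increasing
order) and `sign(S) = (−1)^{Σ_{k∈S} k + s(s−1)/2}` is the shuffle sign. -/
theorem stmt3 (A : Type*) [CommRing A] (s t m : ℕ)
    (a : Fin s → Fin m → A) (b : Fin t → Fin m → A) :
    letI e : (Fin s ⊕ Fin t) → ExteriorAlgebra A ((Fin s ⊕ Fin t) → A) :=
      fun i => ι A (Pi.single i (1 : A))
    letI gb : Fin m → ExteriorAlgebra A ((Fin s ⊕ Fin t) → A) :=
      fun k => ∑ j : Fin t, b j k • e (Sum.inr j)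
    letI P : ExteriorAlgebra A ((Fin s ⊕ Fin t) → A) :=
      ((List.finRange m).map
        (fun k => (∑ i : Fin s, a i k • e (Sum.inl i)) + gb k)).prod
    letI contractTop : ExteriorAlgebra A ((Fin s ⊕ Fin t) → A) →
        ExteriorAlgebra A ((Fin s ⊕ Fin t) → A) :=
      fun x => (List.finRange s).foldl
        (fun y i => CliffordAlgebra.contractLeft
          (LinearMap.proj (Sum.inl i) : Module.Dual A ((Fin s ⊕ Fin t) → A)) y) x
    contractTop P
      = ∑ S : {S : Finset (Fin m) // S.card = s},
          ((-1 : A) ^ ((∑ k ∈ S.1, (k : ℕ)) + s * (s - 1) / 2) *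
            Matrix.det (Matrix.of fun i l : Fin s => a i (S.1.orderIsoOfFin S.2 l))) •
          ((S.1ᶜ.sort (· ≤ ·)).map gb).prod := by
  let Φ : Fin s → Module.Dual A ((Fin s ⊕ Fin t) → A) := fun i => LinearMap.proj (Sum.inl i)
  let f : Fin m → (Fin s ⊕ Fin t) → A := fun k => ∑ i, a i k • Pi.single (Sum.inl i) 1
  let g : Fin m → (Fin s ⊕ Fin t) → A := fun k => ∑ j, b j k • Pi.single (Sum.inr j) 1
  have hf (k : Fin m) : f k ∈ Submodule.span A (Set.range fun i => Pi.single (Sum.inl i) 1) :=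
    (Submodule.mem_span_range_iff_exists_fun A).mpr ⟨fun i => a i k, rfl⟩
  have hΦf (i : Fin s) (k : Fin m) : Φ i (f k) = a i k := by simp [Φ, f, Pi.single_apply]
  have hΦg (i : Fin s) (k : Fin m) : Φ i (g k) = 0 := by simp [Φ, g]
  have hgb : (fun k => ∑ j, b j k • ι A (Pi.single (Sum.inr j) 1)) = fun k => ι A (g k) := by
    simp [g, map_sum, map_smul]
  have hP : (List.finRange m).map (fun k =>
        ∑ i, a i k • ι A (Pi.single (Sum.inl i) 1) + ∑ j, b j k • ι A (Pi.single (Sum.inr j) 1))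
      = List.ofFn fun k => ι A ((f + g) k) := by
    simp [List.ofFn_eq_map, f, g, map_sum, map_smul]
  have hcontract (x : ExteriorAlgebra A ((Fin s ⊕ Fin t) → A)) :
      (List.finRange s).foldl (fun y i => CliffordAlgebra.contractLeft (Φ i) y) x
        = contractLeftList (List.ofFn Φ) x := by
    rw [contractLeftList_apply, List.ofFn_eq_map, List.foldl_map]
  dsimp only
  rw [hcontract, hP, ← ιMulti_apply, contractLeftList_ofFn_ιMulti_add Φ _ f g hf hΦg, hgb]
  simp only [hΦf]
  rfl
end

section
/- Let R be a commutative ring and for each j = 1,...,n let T_j(x_j) ∈ R[x_j] be a monic polynomial in the single variable x_j, with l_j : R[x_j] → R the functional annihilating (T_j) and dual to x_j^{deg T_j − 1} as above. Set F_j(x) = T_j(x_j) ∈ R[x_1,...,x_n] and let l = l_1 ⊗ ··· ⊗ l_n : R[x] → R. Let ∇^k F_j(x,y) be polynomials with F_j(x) − F_j(y) = Σ_k (x_k − y_k)∇^k F_j(x,y), where one may take ∇^k F_j = 0 for k ≠ j and ∇^j F_j(x,y) = ∇T_j(x_j,y_j). Then applying l in the y-variables to det(∇^k F_j(x,y))_{j,k}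 yields 1 in R[x]: l_y(det ‖∇F(x,y)‖) = 1. -/
/-!
The diagonal entries `D j` are forced to be the divided differences `∇T_j(x_j, y_j)`, because
`x_j - y_j` is a nonzerodivisor. Since `l` is the tensor product of the `l_j`, applying it in the
`y`-variables to a product of polynomials in separate pairs `(x_j, y_j)` gives the product of the
`l_j` applied in `y_j`. Finally `l_{j,y}(∇T_j(x, y)) = 1`: the only monomial `x^k y^m` of `∇T_j`
with `m ≥ deg T_j - 1` is `y^(deg T_j - 1)`, with coefficient the leading coefficient `1`.
-/

open MvPolynomial Finset

namespace Polynomial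

variable {R : Type*} [CommRing R]

section

variable {S : Type*} [CommRing S] [Algebra R S]

def dividedDifference (p : R[X]) (x y : S) : S :=
  ∑ q ∈ (range (p.natDegree + 1)).sigma range, p.coeff q.1 • (x ^ q.2 * y ^ (q.1 - 1 - q.2))

theorem aeval_sub_aeval_eq_mul_dividedDifference (p : R[X]) (x y : S) :
    aeval x p - aeval y p = (x - y) * p.dividedDifference x y := by
  rw [aeval_eq_sum_range, aeval_eq_sum_range, ← sum_sub_distrib, dividedDifference, sum_sigma,
    mul_sum]
  refine sum_congr rfl fun i _ => ?_
  dsimp only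
  rw [← smul_sub, ← smul_sum, mul_smul_comm, mul_comm, ← geom_sum₂_mul]

end

/-- The left side is `ℓ` applied in `y` to `T.dividedDifference x y`. -/
theorem sum_coeff_mul_smul_pow_eq_one {A : Type*} [Semiring A] [Algebra R A] {T : R[X]}
    (hT : T.Monic) (hd : 0 < T.natDegree) (ℓ : R[X] →ₗ[R] R)
    (hl0 : ∀ δ < T.natDegree - 1, ℓ (X ^ δ) = 0) (hl1 : ℓ (X ^ (T.natDegree - 1)) = 1)
    (x : A) :
    ∑ q ∈ (range (T.natDegree + 1)).sigma range,
      (T.coeff q.1 * ℓ (X ^ (q.1 - 1 - q.2))) • x ^ q.2 = 1 := by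
  rw [sum_sigma, sum_eq_single_of_mem T.natDegree (self_mem_range_succ _),
    sum_eq_single_of_mem 0 (mem_range.2 hd)]
  · simp [hT.coeff_natDegree, hl1]
  · intro k _ hk0
    rw [hl0 _ (by grind), mul_zero, zero_smul]
  · intro i hi hid
    refine sum_eq_zero fun k hk => ?_
    rw [hl0 _ (by grind), mul_zero, zero_smul]

end Polynomial

namespace MvPolynomial

variable {R σ : Type*} [CommRing R]

/-- The substitution `X a ↦ X a + X b` is invertible and sends `X a - X b` to `X a`. -/
theorem isLeftRegular_X_sub_X {a b : σ} (hab : a ≠ b) :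
    IsLeftRegular (X a - X b : MvPolynomial σ R) := by
  classical
  let shift (s : MvPolynomial σ R) : MvPolynomial σ R →ₐ[R] MvPolynomial σ R :=
    aeval (Function.update X a (X a + s))
  have hinv : (shift (-X b)).comp (shift (X b)) = AlgHom.id R _ := by
    refine algHom_ext fun v => ?_
    by_cases hv : v = a
    · subst hv; simp [shift, Ne.symm hab]
    · simp [shift, hv]
  have hinj : Function.Injective (shift (X b)) :=
    Function.LeftInverse.injective (g := shift (-X b)) fun p => by
      rw [← AlgHom.comp_apply, hinv, AlgHom.id_apply]
  have hX : shift (X b) (X a - X b) = X a := by simp [shift, Ne.symm hab]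
  intro p q h
  apply hinj
  have h' := congrArg (shift (X b)) h
  simp only [map_mul, hX] at h'
  exact isRegular_X.left h'

variable [Fintype σ]

/-- The paper's `l_y`: apply `l` to the `y = inr` variables, keeping the `x = inl` variables. -/
noncomputable def applyY (l : MvPolynomial σ R →ₗ[R] R) :
    MvPolynomial (σ ⊕ σ) R →+ MvPolynomial σ R where
  toFun Q := (AddMonoidAlgebra.coeff Q).sum fun m c =>
    (c * l (∏ j, X j ^ m (Sum.inr j))) • ∏ j, (X j : MvPolynomial σ R) ^ m (Sum.inl j)
  map_zero' := Finsupp.sum_zero_index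
  map_add' P Q := by
    rw [AddMonoidAlgebra.coeff_add]
    exact Finsupp.sum_add_index (fun _ _ => by rw [zero_mul, zero_smul])
      (fun _ _ _ _ => by rw [add_mul, add_smul])

theorem applyY_monomial (l : MvPolynomial σ R →ₗ[R] R) (m : σ ⊕ σ →₀ ℕ) (c : R) :
    applyY l (monomial m c) =
      (c * l (∏ j, X j ^ m (Sum.inr j))) • ∏ j, (X j : MvPolynomial σ R) ^ m (Sum.inl j) :=
  sum_monomial_eq (b := fun m c =>
    (c * l (∏ j, X j ^ m (Sum.inr j))) • ∏ j, (X j : MvPolynomial σ R) ^ m (Sum.inl j))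
    (by simp)

theorem applyY_prod_sum {κ : Type*} {l : MvPolynomial σ R →ₗ[R] R}
    {lj : σ → Polynomial R →ₗ[R] R}
    (hl : ∀ δ : σ → ℕ, l (∏ j, X j ^ δ j) = ∏ j, lj j (Polynomial.X ^ δ j))
    (t : σ → Finset κ) (c : σ → κ → R) (a b : σ → κ → ℕ) :
    applyY l (∏ j, ∑ q ∈ t j, c j q • (X (Sum.inl j) ^ a j q * X (Sum.inr j) ^ b j q)) =
      ∏ j, ∑ q ∈ t j,
        (c j q * lj j (Polynomial.X ^ b j q)) • (X j : MvPolynomial σ R) ^ a j q := by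
  classical
  have hmono : ∀ j q, c j q • (X (Sum.inl j) ^ a j q * X (Sum.inr j) ^ b j q) =
      (monomial (Finsupp.single (Sum.inl j) (a j q) + Finsupp.single (Sum.inr j) (b j q)) (c j q)
        : MvPolynomial (σ ⊕ σ) R) := by
    intro j q
    rw [X_pow_eq_monomial, X_pow_eq_monomial, monomial_mul, smul_monomial, smul_eq_mul, mul_one,
      mul_one]
  simp_rw [hmono, prod_univ_sum, ← monomial_sum_prod, map_sum, applyY_monomial]
  refine sum_congr rfl fun f _ => ?_
  simp [Finsupp.single_apply, hl, prod_smul, prod_mul_distrib]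

end MvPolynomial

theorem stmt10_general (R : Type*) [CommRing R] (n : ℕ) (d : Fin n → ℕ)
    (hd : ∀ j, 1 ≤ d j) (T : Fin n → Polynomial R)
    (hT : ∀ j, (T j).Monic) (hdeg : ∀ j, (T j).natDegree = d j)
    (lj : Fin n → (Polynomial R →ₗ[R] R))
    (hl0 : ∀ j, ∀ δ : ℕ, δ < d j - 1 → lj j (Polynomial.X ^ δ) = 0)
    (hl1 : ∀ j, lj j (Polynomial.X ^ (d j - 1)) = 1)
    (l : MvPolynomial (Fin n) R →ₗ[R] R)
    (hl : ∀ δ : Fin n → ℕ,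
      l (∏ j : Fin n, X j ^ δ j) = ∏ j : Fin n, lj j (Polynomial.X ^ δ j))
    (D : Fin n → MvPolynomial (Fin n ⊕ Fin n) R)
    (hD : ∀ j, Polynomial.aeval (X (Sum.inl j) : MvPolynomial (Fin n ⊕ Fin n) R) (T j)
            - Polynomial.aeval (X (Sum.inr j)) (T j)
          = (X (Sum.inl j) - X (Sum.inr j)) * D j) :
    letI ly : MvPolynomial (Fin n ⊕ Fin n) R → MvPolynomial (Fin n) R :=
      fun Q => (AddMonoidAlgebra.coeff Q).sum (fun m c =>
        (c * l (∏ j : Fin n, X j ^ m (Sum.inr j))) •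
          ∏ j : Fin n, (X j : MvPolynomial (Fin n) R) ^ m (Sum.inl j))
    ly (Matrix.det (Matrix.diagonal D)) = 1 := by
  obtain rfl : d = fun j => (T j).natDegree := funext fun j => (hdeg j).symm
  have hD_eq : ∀ j, D j = (T j).dividedDifference (X (Sum.inl j)) (X (Sum.inr j)) := fun j =>
    isLeftRegular_X_sub_X Sum.inl_ne_inr
      ((hD j).symm.trans (Polynomial.aeval_sub_aeval_eq_mul_dividedDifference _ _ _))
  show applyY l _ = 1
  rw [Matrix.det_diagonal, prod_congr rfl fun j _ => hD_eq j]
  simp only [Polynomial.dividedDifference]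
  rw [applyY_prod_sum hl]
  exact prod_eq_one fun j _ => Polynomial.sum_coeff_mul_smul_pow_eq_one (hT j) (hd j) (lj j)
    (hl0 j) (hl1 j) _

/-- For each `j` let `Tⱼ ∈ R[z]` be monic of degree `dⱼ ≥ 1`
with `lⱼ : R[z] → R` the functional annihilating `(Tⱼ)` and dual to
`z^{dⱼ−1}`, and let `l = l₁ ⊗ ··· ⊗ lₙ : R[x₁,...,xₙ] → R`.  Set
`Fⱼ(x) = Tⱼ(xⱼ)` and let `∇Tⱼ(xⱼ,yⱼ)` be the divided differences, so the
matrix `∇F(x,y)` is diagonal with entries `∇Tⱼ`.  Then applying `l` in the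
`y`-variables to `det ∇F(x,y)` yields `1` in `R[x]`.  (Variables: the
`2n`-variable ring is `MvPolynomial (Fin n ⊕ Fin n) R`, `inl = x`, `inr = y`.) -/
theorem stmt10 (R : Type*) [CommRing R] (n : ℕ) (d : Fin n → ℕ)
    (hd : ∀ j, 1 ≤ d j) (T : Fin n → Polynomial R)
    (hT : ∀ j, (T j).Monic) (hdeg : ∀ j, (T j).natDegree = d j)
    (lj : Fin n → (Polynomial R →ₗ[R] R))
    (hl0 : ∀ j, ∀ δ : ℕ, δ < d j - 1 → lj j (Polynomial.X ^ δ) = 0)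
    (hl1 : ∀ j, lj j (Polynomial.X ^ (d j - 1)) = 1)
    (hlT : ∀ j, ∀ p : Polynomial R, lj j (T j * p) = 0)
    (l : MvPolynomial (Fin n) R →ₗ[R] R)
    (hl : ∀ δ : Fin n → ℕ,
      l (∏ j : Fin n, X j ^ δ j) = ∏ j : Fin n, lj j (Polynomial.X ^ δ j))
    (D : Fin n → MvPolynomial (Fin n ⊕ Fin n) R)
    (hD : ∀ j, Polynomial.aeval (X (Sum.inl j) : MvPolynomial (Fin n ⊕ Fin n) R) (T j)
            - Polynomial.aeval (X (Sum.inr j)) (T j)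
          = (X (Sum.inl j) - X (Sum.inr j)) * D j) :
    letI ly : MvPolynomial (Fin n ⊕ Fin n) R → MvPolynomial (Fin n) R :=
      fun Q => (AddMonoidAlgebra.coeff Q).sum (fun m c =>
        (c * l (∏ j : Fin n, X j ^ m (Sum.inr j))) •
          ∏ j : Fin n, (X j : MvPolynomial (Fin n) R) ^ m (Sum.inl j))
    ly (Matrix.det (Matrix.diagonal D)) = 1 :=
  stmt10_general R n d hd T hT hdeg lj hl0 hl1 l hl D hD
end
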